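/- arXiv:2007.12313 — 4 statements merged into one kernel-verified Lean document; each statement's English description precedes it below -/
import Mathlib

section
/- Theorem 1 (MSE of the NCT estimator, fixed design). Assume the sub-Weibull noise assumption with parameters σ > 0 and α ∈ (0,2]. Fix δ ∈ (0,1), set ρ = (2/√n)(log(2r/δ))^{1/α} and take the threshold τ = σρ. Then, with probability at least 1 − δ, the NCT estimator β̂ with threshold τ satisfies the two-sided bound (1/4)·∑_{j=1}^r min(σρ, |θ_j|)² ≤ MSE(β̂) ≤ 9·∑_{j=1}^r min(σρ, |θ_j|)². -/
/-!
In the canonical coordinates `z_j = λ̂_j^{-1/2} (Ûᵀ Xᵀ Y)_j / n` the problem decouples: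
`z_j = θ_j + ξ_j` with `ξ_j = w_jᵀ ε / √n`, where the `w_j` are the orthonormal columns of
`X Û Λ̂⁻¹ / √n`, and `MSE(β̂) = ∑ⱼ (SOFT_τ(z_j) − θ_j)²`. Whenever `|ξ_j| ≤ τ/2`, a
one-dimensional case analysis (is `z_j` killed by the threshold or shifted by exactly `τ`?) gives
`min(τ, |θ_j|)/2 ≤ |SOFT_τ(z_j) − θ_j| ≤ 3 min(τ, |θ_j|)`. The choice of `ρ` makes the
sub-Weibull tail of each `w_jᵀ ε` at level `σ √n ρ / 2` exactly `δ / r`, so a union bound over the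
`r` coordinates finishes.
-/

open MeasureTheory Matrix Finset

/-- Soft thresholding: `SOFT_τ(z) = z·max(1 − τ/|z|, 0)`. -/
noncomputable def soft (τ z : ℝ) : ℝ := z * max (1 - τ / |z|) 0

theorem soft_eq_zero_of_abs_le {τ z : ℝ} (h : |z| ≤ τ) : soft τ z = 0 := by
  rcases eq_or_ne z 0 with rfl | hz
  · simp [soft]
  · have hneg : 1 - τ / |z| ≤ 0 := by
      rw [sub_nonpos, le_div_iff₀ (abs_pos.2 hz)]; linarith
    simp [soft, max_eq_right hneg]

theorem abs_soft_sub_self_of_lt_abs {τ z : ℝ} (hτ : 0 ≤ τ) (h : τ < |z|) :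
    |soft τ z - z| = τ := by
  have hz : 0 < |z| := hτ.trans_lt h
  have hnonneg : 0 ≤ 1 - τ / |z| := by rw [sub_nonneg, div_le_one hz]; exact h.le
  rw [soft, max_eq_left hnonneg, show z * (1 - τ / |z|) - z = -(τ * (z / |z|)) by ring,
    abs_neg, abs_mul, abs_div, abs_abs, div_self hz.ne', mul_one, abs_of_nonneg hτ]

theorem abs_soft_add_sub_bounds {τ t ξ : ℝ} (hτ : 0 < τ) (hξ : |ξ| ≤ τ / 2) :
    min τ |t| / 2 ≤ |soft τ (t + ξ) - t| ∧ |soft τ (t + ξ) - t| ≤ 3 * min τ |t| := by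
  have hle : |t + ξ| ≤ |t| + |ξ| := abs_add_le t ξ
  have hge : |t| ≤ |t + ξ| + |ξ| := by simpa using abs_sub (t + ξ) ξ
  have hmin := min_le_left τ |t|
  rcases le_or_gt |t + ξ| τ with hsmall | hlarge
  · rw [soft_eq_zero_of_abs_le hsmall, zero_sub, abs_neg]
    refine ⟨by linarith [min_le_right τ |t|, abs_nonneg t], ?_⟩
    rcases min_cases τ |t| with ⟨h, -⟩ | ⟨h, -⟩ <;> rw [h] <;> linarith [abs_nonneg t]
  · have hmove := abs_soft_sub_self_of_lt_abs hτ.le hlarge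
    have hsplit : soft τ (t + ξ) - t = (soft τ (t + ξ) - (t + ξ)) + ξ := by ring
    have hup : |soft τ (t + ξ) - t| ≤ τ + |ξ| := by
      rw [hsplit]; linarith [abs_add_le (soft τ (t + ξ) - (t + ξ)) ξ]
    have hlo : τ - |ξ| ≤ |soft τ (t + ξ) - t| := by
      rw [hsplit]; linarith [abs_sub_abs_le_abs_add (soft τ (t + ξ) - (t + ξ)) ξ]
    refine ⟨by linarith, ?_⟩
    rcases min_cases τ |t| with ⟨h, -⟩ | ⟨h, -⟩ <;> rw [h] <;> linarith

theorem sum_sq_soft_add_sub_bounds {ι : Type*} [Fintype ι] {τ : ℝ} {t ξ : ι → ℝ}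
    (hτ : 0 < τ) (hξ : ∀ j, |ξ j| ≤ τ / 2) :
    1 / 4 * ∑ j, min τ |t j| ^ 2 ≤ ∑ j, (soft τ (t j + ξ j) - t j) ^ 2 ∧
      ∑ j, (soft τ (t j + ξ j) - t j) ^ 2 ≤ 9 * ∑ j, min τ |t j| ^ 2 := by
  rw [mul_sum, mul_sum]
  constructor <;> refine sum_le_sum fun j _ => ?_ <;>
    obtain ⟨hlo, hhi⟩ := abs_soft_add_sub_bounds (t := t j) hτ (hξ j) <;>
    rw [← sq_abs (soft τ (t j + ξ j) - t j)] <;>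
    nlinarith [le_min hτ.le (abs_nonneg (t j))]

theorem ofReal_one_sub_le_measure_iInter_compl {Ω ι : Type*} [MeasurableSpace Ω] [Fintype ι]
    {P : Measure Ω} [IsProbabilityMeasure P] {B : ι → Set Ω} {δ : ℝ} (hδ : 0 ≤ δ)
    (hB : ∀ j, P (B j) ≤ ENNReal.ofReal (δ / Fintype.card ι)) :
    ENNReal.ofReal (1 - δ) ≤ P (⋂ j, (B j)ᶜ) := by
  have hunion : P (⋃ j, B j) ≤ ENNReal.ofReal δ :=
    calc P (⋃ j, B j) ≤ ∑ j, P (B j) := measure_iUnion_fintype_le P B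
      _ ≤ ∑ _j : ι, ENNReal.ofReal (δ / Fintype.card ι) := sum_le_sum fun j _ => hB j
      _ = ENNReal.ofReal (Fintype.card ι * (δ / Fintype.card ι)) := by
        rw [sum_const, card_univ, nsmul_eq_mul, ENNReal.ofReal_mul (by positivity),
          ENNReal.ofReal_natCast]
      _ ≤ ENNReal.ofReal δ := by
        rcases eq_or_ne (Fintype.card ι : ℝ) 0 with h | h
        · simp [h]
        · rw [mul_div_cancel₀ _ h]
  have htotal := measure_univ_le_add_compl (μ := P) (⋂ j, (B j)ᶜ)
  simp only [measure_univ, Set.compl_iInter, compl_compl] at htotal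
  rw [ENNReal.ofReal_sub _ hδ, ENNReal.ofReal_one, tsub_le_iff_right]
  exact htotal.trans (add_le_add_right hunion _)

theorem exp_neg_log_rpow_one_div_rpow {α x : ℝ} (hα : α ≠ 0) (hx : 1 ≤ x) :
    Real.exp (-(Real.log x ^ (1 / α)) ^ α) = x⁻¹ := by
  rw [← Real.rpow_mul (Real.log_nonneg hx), one_div_mul_cancel hα, Real.rpow_one, Real.exp_neg,
    Real.exp_log (by linarith)]

section Eigendecomposition

variable {m k : Type*} [Fintype m] [Fintype k] [DecidableEq k]
  {U : Matrix m k ℝ} {lam : k → ℝ} {C : Matrix m m ℝ}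

theorem dotProduct_mulVec_eq_sum_mul_sq (hC : C = U * diagonal lam * Uᵀ) (v : m → ℝ) :
    v ⬝ᵥ C *ᵥ v = ∑ j, lam j * (Uᵀ *ᵥ v) j ^ 2 := by
  rw [hC, ← mulVec_mulVec, ← mulVec_mulVec, dotProduct_mulVec, ← mulVec_transpose]
  simp only [dotProduct, mulVec_diagonal]
  exact sum_congr rfl fun j _ => by ring

theorem transpose_mul_eq_diagonal_mul_transpose (hU : Uᵀ * U = 1)
    (hC : C = U * diagonal lam * Uᵀ) : Uᵀ * C = diagonal lam * Uᵀ := by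
  rw [hC, ← Matrix.mul_assoc, ← Matrix.mul_assoc, hU, Matrix.one_mul]

theorem sub_dotProduct_mulVec_sub_eq_sum_sq (hU : Uᵀ * U = 1)
    (hC : C = U * diagonal lam * Uᵀ) (hpos : ∀ j, 0 < lam j) (s : k → ℝ) (β : m → ℝ) :
    (U *ᵥ (fun j => (√(lam j))⁻¹ * s j) - β) ⬝ᵥ C *ᵥ (U *ᵥ (fun j => (√(lam j))⁻¹ * s j) - β) =
      ∑ j, (s j - √(lam j) * (Uᵀ *ᵥ β) j) ^ 2 := by
  rw [dotProduct_mulVec_eq_sum_mul_sq hC, mulVec_sub, mulVec_mulVec, hU, one_mulVec]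
  refine sum_congr rfl fun j _ => ?_
  have hsqrt : 0 < √(lam j) := Real.sqrt_pos.2 (hpos j)
  rw [Pi.sub_apply]
  field_simp
  rw [Real.sq_sqrt (hpos j).le]

end Eigendecomposition

section Regression

variable {n : ℕ} {m k : Type*} [Fintype m] [Fintype k] [DecidableEq k]
  {X : Matrix (Fin n) m ℝ} {U : Matrix m k ℝ} {lam : k → ℝ}

/-- Column `j` of `X Û Λ̂⁻¹ / √n`. -/
noncomputable def canonicalNoiseDirection (X : Matrix (Fin n) m ℝ) (U : Matrix m k ℝ)
    (lam : k → ℝ) (j : k) : Fin n → ℝ :=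
  fun i => (X * U) i j / √(n * lam j)

theorem transpose_mul_gram_eq (hn : 0 < n) (hU : Uᵀ * U = 1)
    (hC : (n : ℝ)⁻¹ • (Xᵀ * X) = U * diagonal lam * Uᵀ) :
    Uᵀ * (Xᵀ * X) = (n : ℝ) • (diagonal lam * Uᵀ) := by
  rw [← transpose_mul_eq_diagonal_mul_transpose hU hC, Matrix.mul_smul, smul_smul,
    mul_inv_cancel₀ (by positivity), one_smul]

theorem sum_sq_canonicalNoiseDirection (hn : 0 < n) (hU : Uᵀ * U = 1)
    (hC : (n : ℝ)⁻¹ • (Xᵀ * X) = U * diagonal lam * Uᵀ) {j : k} (hj : 0 < lam j) :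
    ∑ i, canonicalNoiseDirection X U lam j i ^ 2 = 1 := by
  have hgram : (X * U)ᵀ * (X * U) = (n : ℝ) • diagonal lam := by
    rw [transpose_mul, Matrix.mul_assoc, ← Matrix.mul_assoc Xᵀ, ← Matrix.mul_assoc Uᵀ,
      transpose_mul_gram_eq hn hU hC, Matrix.smul_mul, Matrix.mul_assoc, hU, Matrix.mul_one]
  have hcol := congrFun (congrFun hgram j) j
  rw [mul_apply] at hcol
  simp only [transpose_apply, Matrix.smul_apply, diagonal_apply_eq, smul_eq_mul] at hcol
  have hnl : (0 : ℝ) < n * lam j := by positivity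
  simp only [canonicalNoiseDirection, div_pow, Real.sq_sqrt hnl.le]
  rw [← sum_div]
  simp only [sq]
  rw [hcol, div_self hnl.ne']

theorem canonical_coordinate_eq_add_noise (hn : 0 < n) (hU : Uᵀ * U = 1)
    (hC : (n : ℝ)⁻¹ • (Xᵀ * X) = U * diagonal lam * Uᵀ) {j : k} (hj : 0 < lam j)
    (β : m → ℝ) (e : Fin n → ℝ) :
    (√(lam j))⁻¹ * (Uᵀ *ᵥ (Xᵀ *ᵥ (X *ᵥ β + e))) j / n =
      √(lam j) * (Uᵀ *ᵥ β) j + (∑ i, canonicalNoiseDirection X U lam j i * e i) / √n := by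
  have hsignal : (Uᵀ *ᵥ (Xᵀ *ᵥ (X *ᵥ β))) j = n * (lam j * (Uᵀ *ᵥ β) j) := by
    rw [mulVec_mulVec, mulVec_mulVec, Matrix.mul_assoc, transpose_mul_gram_eq hn hU hC, smul_mulVec,
      ← mulVec_mulVec, Pi.smul_apply, mulVec_diagonal, smul_eq_mul]
  have hnoise : (Uᵀ *ᵥ (Xᵀ *ᵥ e)) j = ∑ i, (X * U) i j * e i := by
    rw [mulVec_mulVec, ← transpose_mul]
    simp only [mulVec, dotProduct, transpose_apply]
  have hn' : (0 : ℝ) < n := by positivity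
  rw [mulVec_add, mulVec_add, Pi.add_apply, hsignal, hnoise]
  simp only [canonicalNoiseDirection, Real.sqrt_mul hn'.le, div_mul_eq_mul_div, ← sum_div]
  generalize ∑ i, (X * U) i j * e i = N
  have hsqrt_lam := Real.sqrt_pos.2 hj
  have hsqrt_n := Real.sqrt_pos.2 hn'
  field_simp
  rw [Real.sq_sqrt hj.le, Real.sq_sqrt hn'.le]
  ring

end Regression

theorem stmt_0_general
    {Ω : Type*} [MeasurableSpace Ω] (P : Measure Ω) [IsProbabilityMeasure P]
    (n d r : ℕ) (hn : 0 < n) (hr : 0 < r)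
    (X : Matrix (Fin n) (Fin d) ℝ) (β : Fin d → ℝ)
    (U : Matrix (Fin d) (Fin r) ℝ) (lam : Fin r → ℝ)
    (hU : Uᵀ * U = 1)
    (hpos : ∀ j, 0 < lam j)
    (hdecomp : (n : ℝ)⁻¹ • (Xᵀ * X) = U * Matrix.diagonal lam * Uᵀ)
    (ε : Ω → Fin n → ℝ)
    (σ α : ℝ) (hσ : 0 < σ) (hα : α ∈ Set.Ioc (0:ℝ) 2)
    (hnoise : ∀ w : Fin n → ℝ, ∑ i, (w i) ^ 2 = 1 → ∀ t : ℝ, 0 < t →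
      P {ω | t ≤ |∑ i, w i * ε ω i|} ≤ ENNReal.ofReal (2 * Real.exp (-((t / σ) ^ α))))
    (δ : ℝ) (hδ : δ ∈ Set.Ioo (0:ℝ) 1) :
    let ρ : ℝ := 2 / Real.sqrt n * Real.log (2 * r / δ) ^ (1 / α)
    let θ : Fin r → ℝ := fun j => Real.sqrt (lam j) * (Uᵀ.mulVec β) j
    let S : ℝ := ∑ j, (min (σ * ρ) |θ j|) ^ 2
    let bhat : Ω → Fin d → ℝ := fun ω => U.mulVec fun j =>
      (Real.sqrt (lam j))⁻¹ * soft (σ * ρ)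
        ((Real.sqrt (lam j))⁻¹ * (Uᵀ.mulVec (Xᵀ.mulVec (X.mulVec β + ε ω))) j / n)
    let MSE : (Fin d → ℝ) → ℝ := fun b =>
      (b - β) ⬝ᵥ (((n : ℝ)⁻¹ • (Xᵀ * X)).mulVec (b - β))
    ENNReal.ofReal (1 - δ) ≤
      P {ω | (1 / 4 : ℝ) * S ≤ MSE (bhat ω) ∧ MSE (bhat ω) ≤ 9 * S} := by
  intro ρ θ S bhat MSE
  set w := canonicalNoiseDirection X U lam
  set L := Real.log (2 * r / δ) ^ (1 / α)
  have hρ : ρ = 2 / √n * L := rfl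
  have hsqrt_n : 0 < √(n : ℝ) := Real.sqrt_pos.2 (Nat.cast_pos.2 hn)
  have hquantile : 1 < 2 * r / δ := by
    have : (1 : ℝ) ≤ r := Nat.one_le_cast.2 hr
    rw [lt_div_iff₀ hδ.1]
    linarith [hδ.2]
  have hL : 0 < L := Real.rpow_pos_of_pos (Real.log_pos hquantile) _
  have hτ : 0 < σ * ρ := by rw [hρ]; positivity
  have hgood : ENNReal.ofReal (1 - δ) ≤ P (⋂ j, {ω | σ * L ≤ |∑ i, w j i * ε ω i|}ᶜ) := by
    refine ofReal_one_sub_le_measure_iInter_compl hδ.1.le fun j => ?_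
    refine (hnoise (w j) (sum_sq_canonicalNoiseDirection hn hU hdecomp (hpos j)) _
      (by positivity)).trans_eq ?_
    rw [mul_div_cancel_left₀ _ hσ.ne', exp_neg_log_rpow_one_div_rpow hα.1.ne' hquantile.le,
      Fintype.card_fin]
    congr 1
    field_simp
  refine hgood.trans (measure_mono fun ω hω => ?_)
  have hsmall : ∀ j, |(∑ i, w j i * ε ω i) / √n| ≤ σ * ρ / 2 := by
    intro j
    have hj : |∑ i, w j i * ε ω i| < σ * L := not_le.1 (Set.mem_iInter.1 hω j)
    calc |(∑ i, w j i * ε ω i) / √n| = |∑ i, w j i * ε ω i| / √n := by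
          rw [abs_div, abs_of_pos hsqrt_n]
      _ ≤ σ * L / √n := div_le_div_of_nonneg_right hj.le hsqrt_n.le
      _ = σ * ρ / 2 := by rw [hρ]; ring
  have hmse : MSE (bhat ω) = ∑ j, (soft (σ * ρ) (θ j + (∑ i, w j i * ε ω i) / √n) - θ j) ^ 2 := by
    simp only [MSE, bhat, canonical_coordinate_eq_add_noise hn hU hdecomp (hpos _)]
    exact sub_dotProduct_mulVec_sub_eq_sum_sq hU hdecomp hpos _ β
  rw [Set.mem_ofPred_eq, hmse]
  exact sum_sq_soft_add_sub_bounds hτ hsmall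

/-- Theorem 1, two-sided MSE bound for the NCT estimator, fixed design.
The design `X` is deterministic, the sample covariance `X^⊤X/n` has eigendecomposition
`U·diag(λ̂)·U^⊤` with orthonormal `U ∈ ℝ^{d×r}` and positive decreasing eigenvalues `λ̂`;
`θ_j = λ̂_j^{1/2}(U^⊤β)_j` are the canonical coefficients.  The noise `ε` is sub-Weibull with
parameters `σ, α`.  With `ρ = (2/√n)(log(2r/δ))^{1/α}` and threshold `τ = σρ`, the NCT
estimator `β̂` satisfies, with probability at least `1 − δ`,
`(1/4)·∑ⱼ min(σρ,|θⱼ|)² ≤ MSE(β̂) ≤ 9·∑ⱼ min(σρ,|θⱼ|)²`. -/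
theorem stmt_0
    {Ω : Type*} [MeasurableSpace Ω] (P : Measure Ω) [IsProbabilityMeasure P]
    (n d r : ℕ) (hn : 0 < n) (hr : 0 < r)
    (X : Matrix (Fin n) (Fin d) ℝ) (β : Fin d → ℝ)
    (U : Matrix (Fin d) (Fin r) ℝ) (lam : Fin r → ℝ)
    (hU : Uᵀ * U = 1)
    (hpos : ∀ j, 0 < lam j)
    (hmono : ∀ j k : Fin r, j ≤ k → lam k ≤ lam j)
    (hdecomp : (n : ℝ)⁻¹ • (Xᵀ * X) = U * Matrix.diagonal lam * Uᵀ)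
    (ε : Ω → Fin n → ℝ) (hε : Measurable ε)
    (σ α : ℝ) (hσ : 0 < σ) (hα : α ∈ Set.Ioc (0:ℝ) 2)
    (hnoise : ∀ w : Fin n → ℝ, ∑ i, (w i) ^ 2 = 1 → ∀ t : ℝ, 0 < t →
      P {ω | t ≤ |∑ i, w i * ε ω i|} ≤ ENNReal.ofReal (2 * Real.exp (-((t / σ) ^ α))))
    (δ : ℝ) (hδ : δ ∈ Set.Ioo (0:ℝ) 1) :
    let ρ : ℝ := 2 / Real.sqrt n * Real.log (2 * r / δ) ^ (1 / α)
    let θ : Fin r → ℝ := fun j => Real.sqrt (lam j) * (Uᵀ.mulVec β) j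
    let S : ℝ := ∑ j, (min (σ * ρ) |θ j|) ^ 2
    let bhat : Ω → Fin d → ℝ := fun ω => U.mulVec fun j =>
      (Real.sqrt (lam j))⁻¹ * soft (σ * ρ)
        ((Real.sqrt (lam j))⁻¹ * (Uᵀ.mulVec (Xᵀ.mulVec (X.mulVec β + ε ω))) j / n)
    let MSE : (Fin d → ℝ) → ℝ := fun b =>
      (b - β) ⬝ᵥ (((n : ℝ)⁻¹ • (Xᵀ * X)).mulVec (b - β))
    ENNReal.ofReal (1 - δ) ≤
      P {ω | (1 / 4 : ℝ) * S ≤ MSE (bhat ω) ∧ MSE (bhat ω) ≤ 9 * S} :=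
  stmt_0_general P n d r hn hr X β U lam hU hpos hdecomp ε σ α hσ hα hnoise δ hδ
end

section
/- Proposition 1(iii) (tightness under polynomial decay). Let θ ∈ ℝ^r be nonzero, σ > 0, ρ > 0, and let |θ_{(1)}| ≥ |θ_{(2)}| ≥ … ≥ |θ_{(r)}| be the absolute values of its components in descending order. Suppose there exist a > 0 and constants 0 < c₁ ≤ c₂ such that c₁·j^{−a} ≤ |θ_{(j)}|/|θ_{(1)}| ≤ c₂·j^{−a} for all j ∈ [r]. Then there exists a constant c > 0 depending only on a, c₁, c₂ such that: if a ≥ 1/2, then ∑_{j=1}^r min(σρ, |θ_j|)² ≥ (c/log(e·r)) · inf_{q ∈ [0,2]} { ‖θ‖_q^q · (σρ)^{2−q} }; and if a < 1/2, then ∑_{j=1}^r min(σρ, |θ_j|)² ≥ c · inf_{q ∈ [0,2]} { ‖θ‖_q^q · (σρ)^{2−q} }. -/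
/-!
Put `T = σρ` and let `k` be the number of coordinates with `|θ_j| ≥ T`, so that
`∑ min(T, |θ_j|)² = k T² + ∑_{|θ_j| < T} θ_j²`. If `k = r` or `k = 0` this is exactly the value
of the profile `q ↦ ‖θ‖_q^q T^{2-q}` at `q = 0` or `q = 2`. Otherwise the lower decay bound at the
first index below the threshold gives `c₁ |θ_(1)| ≤ T (k+1)^a`. For `a ≥ 1/2` take `q = 1/a`:
then `|θ_(j)|^q ≤ (c₂ |θ_(1)|)^q / j`, and the harmonic sum bounds the profile by
`(c₂/c₁)^q (1 + log r) (k+1) T²`. For `a < 1/2` take `q = 2`: the head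
`∑_{j ≤ k} θ_(j)² ≤ (c₂ |θ_(1)|)² k^{1-2a} / (1-2a)` is `O(k T²)`, and the tail is common to both
sides.
-/

open Finset

/-- The ℓ_q "norm to the q-th power" with the convention `0⁰ = 0`. -/
noncomputable def lqq {r : ℕ} (q : ℝ) (v : Fin r → ℝ) : ℝ :=
  ∑ j, if v j = 0 then 0 else |v j| ^ q

lemma lqq_le_sum_abs_rpow {r : ℕ} (q : ℝ) (v : Fin r → ℝ) : lqq q v ≤ ∑ i, |v i| ^ q :=
  sum_le_sum fun i _ => by split_ifs; exacts [Real.rpow_nonneg (abs_nonneg _) q, le_rfl]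

lemma lqq_nonneg {r : ℕ} (q : ℝ) (v : Fin r → ℝ) : 0 ≤ lqq q v :=
  sum_nonneg fun i _ => by split <;> positivity

lemma lqq_comp_equiv {r : ℕ} (q : ℝ) (v : Fin r → ℝ) (e : Fin r ≃ Fin r) :
    lqq q (v ∘ e) = lqq q v := by
  unfold lqq
  exact Equiv.sum_comp e fun i => if v i = 0 then 0 else |v i| ^ q

lemma inv_mul_sInf_profile_le {r : ℕ} {θ : Fin r → ℝ} {T K : ℝ} (e : Fin r ≃ Fin r)
    (hT : 0 ≤ T) (hK : 0 < K)
    (h : ∃ q ∈ Set.Icc (0 : ℝ) 2, lqq q (θ ∘ e) * T ^ (2 - q) ≤ K * ∑ j, min T |θ (e j)| ^ 2) :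
    K⁻¹ * sInf ((fun q => lqq q θ * T ^ (2 - q)) '' Set.Icc (0 : ℝ) 2) ≤
      ∑ j, min T |θ j| ^ 2 := by
  obtain ⟨q, hq, hle⟩ := h
  rw [lqq_comp_equiv, Equiv.sum_comp e fun i => min T |θ i| ^ 2] at hle
  have hbdd : BddBelow ((fun q => lqq q θ * T ^ (2 - q)) '' Set.Icc (0 : ℝ) 2) := by
    refine ⟨0, ?_⟩
    rintro _ ⟨q, -, rfl⟩
    exact mul_nonneg (lqq_nonneg q θ) (Real.rpow_nonneg hT _)
  calc K⁻¹ * sInf ((fun q => lqq q θ * T ^ (2 - q)) '' Set.Icc (0 : ℝ) 2)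
      ≤ K⁻¹ * (K * ∑ j, min T |θ j| ^ 2) := by
        gcongr; exact (csInf_le hbdd ⟨q, hq, rfl⟩).trans hle
    _ = ∑ j, min T |θ j| ^ 2 := inv_mul_cancel_left₀ hK.ne' _

lemma mul_add_one_rpow_sub_one_le {p x : ℝ} (hp0 : 0 ≤ p) (hp1 : p ≤ 1) (hx : 0 ≤ x) :
    p * (x + 1) ^ (p - 1) ≤ (x + 1) ^ p - x ^ p := by
  have hx1 : 0 < x + 1 := by linarith
  have hinv : -1 ≤ -(x + 1)⁻¹ := neg_le_neg (inv_le_one_of_one_le₀ (by linarith))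
  have hsplit : x ^ p = (x + 1) ^ p * (1 + -(x + 1)⁻¹) ^ p := by
    rw [← Real.mul_rpow hx1.le (by linarith)]
    congr 1
    field_simp
    ring
  have hbern : (1 + -(x + 1)⁻¹) ^ p ≤ 1 + p * -(x + 1)⁻¹ :=
    rpow_one_add_le_one_add_mul_self hinv hp0 hp1
  rw [hsplit, Real.rpow_sub_one hx1.ne', div_eq_mul_inv]
  nlinarith [Real.rpow_pos_of_pos hx1 p]

lemma sum_range_rpow_sub_one_le {p : ℝ} (hp0 : 0 < p) (hp1 : p ≤ 1) (m : ℕ) :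
    ∑ i ∈ range m, ((i : ℝ) + 1) ^ (p - 1) ≤ (m : ℝ) ^ p / p := by
  induction m with
  | zero => simp [Real.zero_rpow hp0.ne']
  | succ n ih =>
    rw [sum_range_succ, Nat.cast_succ, le_div_iff₀ hp0]
    have := mul_add_one_rpow_sub_one_le hp0.le hp1 (Nat.cast_nonneg n)
    rw [le_div_iff₀ hp0] at ih
    linarith

lemma sum_range_inv_le_one_add_log (n : ℕ) :
    ∑ i ∈ range n, ((i : ℝ) + 1)⁻¹ ≤ 1 + Real.log n := by
  simpa [harmonic] using harmonic_le_one_add_log n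

lemma sum_Iio_val {M : Type*} [AddCommMonoid M] {r : ℕ} (f : ℕ → M) (k : Fin r) :
    ∑ j ∈ Iio k, f j = ∑ i ∈ range k, f i := by
  rw [← Nat.Iio_eq_range, ← Fin.map_valEmbedding_Iio, sum_map]
  rfl

lemma mul_rpow_neg_mul_rpow_inv {a c b x : ℝ} (ha : a ≠ 0) (hc : 0 ≤ c) (hb : 0 ≤ b) (hx : 0 ≤ x) :
    (c * x ^ (-a) * b) ^ a⁻¹ = (c * b) ^ a⁻¹ * x⁻¹ := by
  rw [mul_right_comm, Real.mul_rpow (by positivity) (by positivity), ← Real.rpow_mul hx,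
    neg_mul, mul_inv_cancel₀ ha, Real.rpow_neg_one]

lemma rpow_inv_le_mul_of_le_mul_rpow {a c b T y : ℝ} (ha : 0 < a) (hc : 0 ≤ c) (hb : 0 ≤ b)
    (hT : 0 ≤ T) (hy : 0 ≤ y) (h : c * b ≤ T * y ^ a) : (c * b) ^ a⁻¹ ≤ T ^ a⁻¹ * y := by
  calc (c * b) ^ a⁻¹ ≤ (T * y ^ a) ^ a⁻¹ := by gcongr
    _ = T ^ a⁻¹ * y := by
      rw [Real.mul_rpow hT (by positivity), Real.rpow_rpow_inv hy ha.ne']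

section Threshold

variable {r : ℕ} {u : Fin r → ℝ} {T : ℝ}

lemma exists_threshold_index (hu : Antitone u)
    (h : ∃ j, u j < T) : ∃ k : Fin r, ∀ j, T ≤ u j ↔ j < k := by
  classical
  obtain ⟨j₀, hj₀⟩ := h
  have hne : (univ.filter fun j => u j < T).Nonempty := ⟨j₀, by simpa using hj₀⟩
  refine ⟨(univ.filter fun j => u j < T).min' hne, fun j => ⟨fun hj => ?_, fun hj => ?_⟩⟩
  · exact lt_of_not_ge fun hkj =>
      (hu hkj).not_gt (lt_of_lt_of_le (by simpa using min'_mem _ hne) hj)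
  · by_contra hjT
    exact hj.not_ge (min'_le _ j (by simpa using hjT))

lemma sum_univ_eq_sum_Iio_add_sum_Ici {M : Type*} [AddCommMonoid M] (f : Fin r → M) (k : Fin r) :
    ∑ j, f j = ∑ j ∈ Iio k, f j + ∑ j ∈ Ici k, f j := by
  rw [← sum_filter_add_sum_filter_not univ (· < k)]
  congr 2 <;> ext j <;> simp

lemma sum_min_sq_eq {k : Fin r} (hk : ∀ j, T ≤ u j ↔ j < k) :
    ∑ j, min T (u j) ^ 2 = k * T ^ 2 + ∑ j ∈ Ici k, u j ^ 2 := by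
  rw [sum_univ_eq_sum_Iio_add_sum_Ici _ k]
  congr 1
  · rw [sum_congr rfl fun j hj => by rw [min_eq_left ((hk j).2 (mem_Iio.1 hj))], sum_const,
      Fin.card_Iio, nsmul_eq_mul]
  · refine sum_congr rfl fun j hj => ?_
    rw [min_eq_right (le_of_lt (lt_of_not_ge fun h => (mem_Ici.1 hj).not_gt ((hk j).1 h)))]

lemma mul_sq_le_sum_min_sq {k : Fin r} (hk : ∀ j, T ≤ u j ↔ j < k) :
    k * T ^ 2 ≤ ∑ j, min T (u j) ^ 2 := by
  rw [sum_min_sq_eq hk]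
  exact le_add_of_nonneg_right (sum_nonneg fun j _ => sq_nonneg _)

lemma mul_le_mul_rpow_of_threshold {a c b : ℝ} {k : Fin r}
    (hlb : c * ((k : ℝ) + 1) ^ (-a) * b ≤ u k) (hk : ∀ j, T ≤ u j ↔ j < k) :
    c * b ≤ T * ((k : ℝ) + 1) ^ a := by
  have hkT : u k < T := lt_of_not_ge fun h => lt_irrefl k ((hk k).1 h)
  have hpos : (0 : ℝ) < (k : ℝ) + 1 := by positivity
  calc c * b = c * ((k : ℝ) + 1) ^ (-a) * b * ((k : ℝ) + 1) ^ a := by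
        rw [Real.rpow_neg hpos.le]; field_simp
    _ ≤ T * ((k : ℝ) + 1) ^ a := by gcongr; exact hlb.trans hkT.le

end Threshold

section Decay

variable {r : ℕ} {u : Fin r → ℝ} {a c₁ c₂ b T : ℝ}

lemma sum_rpow_inv_mul_rpow_le (ha : 0 < a) (hc₁ : 0 < c₁) (hc₂ : 0 ≤ c₂) (hb : 0 ≤ b)
    (hT : 0 < T) (hu : ∀ j, 0 ≤ u j) (hub : ∀ j, u j ≤ c₂ * ((j : ℝ) + 1) ^ (-a) * b)
    {k : ℕ} (hk : 1 ≤ k) (hkT : c₁ * b ≤ T * ((k : ℝ) + 1) ^ a) :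
    (∑ j, u j ^ a⁻¹) * T ^ (2 - a⁻¹) ≤ 2 * (c₂ / c₁) ^ a⁻¹ * (1 + Real.log r) * (k * T ^ 2) := by
  have hsum : ∑ j, u j ^ a⁻¹ ≤ (c₂ * b) ^ a⁻¹ * (1 + Real.log r) := by
    calc ∑ j, u j ^ a⁻¹ ≤ ∑ j : Fin r, (c₂ * b) ^ a⁻¹ * ((j : ℝ) + 1)⁻¹ := by
          refine sum_le_sum fun j _ => ?_
          rw [← mul_rpow_neg_mul_rpow_inv ha.ne' hc₂ hb (by positivity)]
          exact Real.rpow_le_rpow (hu j) (hub j) (by positivity)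
      _ ≤ (c₂ * b) ^ a⁻¹ * (1 + Real.log r) := by
          rw [← mul_sum, Fin.sum_univ_eq_sum_range (fun i => ((i : ℝ) + 1)⁻¹)]
          gcongr
          exact sum_range_inv_le_one_add_log r
  have hk2 : (k : ℝ) + 1 ≤ 2 * k := by
    have : (1 : ℝ) ≤ k := by exact_mod_cast hk
    linarith
  have hlog : 0 ≤ 1 + Real.log r := by
    have := Real.log_natCast_nonneg r
    linarith
  calc (∑ j, u j ^ a⁻¹) * T ^ (2 - a⁻¹)
      ≤ (c₂ * b) ^ a⁻¹ * (1 + Real.log r) * T ^ (2 - a⁻¹) := by gcongr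
    _ = (c₂ / c₁) ^ a⁻¹ * (1 + Real.log r) * ((c₁ * b) ^ a⁻¹ * T ^ (2 - a⁻¹)) := by
      rw [show c₂ * b = c₂ / c₁ * (c₁ * b) by field_simp,
        Real.mul_rpow (by positivity) (by positivity)]
      ring
    _ ≤ (c₂ / c₁) ^ a⁻¹ * (1 + Real.log r) * ((T ^ a⁻¹ * ((k : ℝ) + 1)) * T ^ (2 - a⁻¹)) := by
      gcongr
      exact rpow_inv_le_mul_of_le_mul_rpow ha hc₁.le hb hT.le (by positivity) hkT
    _ = (c₂ / c₁) ^ a⁻¹ * (1 + Real.log r) * (((k : ℝ) + 1) * T ^ 2) := by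
      rw [mul_right_comm (T ^ a⁻¹), mul_comm (T ^ a⁻¹ * _), ← Real.rpow_add hT, add_sub_cancel,
        Real.rpow_two]
    _ ≤ (c₂ / c₁) ^ a⁻¹ * (1 + Real.log r) * (2 * k * T ^ 2) := by gcongr
    _ = _ := by ring

lemma sum_Iio_sq_le (ha₀ : 0 ≤ a) (ha : a < 1 / 2) (hc₁ : 0 < c₁) (hb : 0 ≤ b)
    (hu : ∀ j, 0 ≤ u j) (hub : ∀ j, u j ≤ c₂ * ((j : ℝ) + 1) ^ (-a) * b)
    {k : Fin r} (hk : 1 ≤ (k : ℕ)) (hkT : c₁ * b ≤ T * ((k : ℝ) + 1) ^ a) :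
    ∑ j ∈ Iio k, u j ^ 2 ≤ (c₂ / c₁) ^ 2 * 2 ^ (2 * a) / (1 - 2 * a) * (k * T ^ 2) := by
  have hp : 0 < 1 - 2 * a := by linarith
  have hk0 : (0 : ℝ) < k := by exact_mod_cast hk
  have hk1 : (1 : ℝ) ≤ k := by exact_mod_cast hk
  have hsq_rpow : ∀ x y : ℝ, 0 ≤ x → (x ^ y) ^ 2 = x ^ (2 * y) := fun x y hx => by
    rw [← Real.rpow_mul_natCast hx, mul_comm]; norm_num
  have hsum : ∑ j ∈ Iio k, u j ^ 2 ≤ (c₂ * b) ^ 2 * ((k : ℝ) ^ (1 - 2 * a) / (1 - 2 * a)) := by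
    calc ∑ j ∈ Iio k, u j ^ 2
        ≤ ∑ j ∈ Iio k, (c₂ * b) ^ 2 * ((j : ℝ) + 1) ^ ((1 - 2 * a) - 1) := by
          refine sum_le_sum fun j _ => ?_
          calc u j ^ 2 ≤ (c₂ * ((j : ℝ) + 1) ^ (-a) * b) ^ 2 := by gcongr; exacts [hu j, hub j]
            _ = (c₂ * b) ^ 2 * ((j : ℝ) + 1) ^ ((1 - 2 * a) - 1) := by
              rw [show (1 - 2 * a) - 1 = 2 * -a by ring, ← hsq_rpow _ _ (by positivity)]
              ring
      _ = (c₂ * b) ^ 2 * ∑ i ∈ range k, ((i : ℝ) + 1) ^ ((1 - 2 * a) - 1) := by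
          rw [← mul_sum, sum_Iio_val (fun i => ((i : ℝ) + 1) ^ ((1 - 2 * a) - 1))]
      _ ≤ (c₂ * b) ^ 2 * ((k : ℝ) ^ (1 - 2 * a) / (1 - 2 * a)) := by
          gcongr
          exact sum_range_rpow_sub_one_le hp (by linarith) k
  have hcb : (c₁ * b) ^ 2 ≤ T ^ 2 * 2 ^ (2 * a) * (k : ℝ) ^ (2 * a) := by
    calc (c₁ * b) ^ 2 ≤ (T * ((k : ℝ) + 1) ^ a) ^ 2 := by gcongr
      _ = T ^ 2 * ((k : ℝ) + 1) ^ (2 * a) := by rw [mul_pow, hsq_rpow _ _ (by positivity)]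
      _ ≤ T ^ 2 * (2 * (k : ℝ)) ^ (2 * a) := by gcongr; linarith
      _ = T ^ 2 * 2 ^ (2 * a) * (k : ℝ) ^ (2 * a) := by
          rw [Real.mul_rpow (by norm_num) hk0.le]; ring
  calc ∑ j ∈ Iio k, u j ^ 2
      ≤ (c₂ * b) ^ 2 * ((k : ℝ) ^ (1 - 2 * a) / (1 - 2 * a)) := hsum
    _ = (c₂ / c₁) ^ 2 / (1 - 2 * a) * ((c₁ * b) ^ 2 * (k : ℝ) ^ (1 - 2 * a)) := by
        field_simp
    _ ≤ (c₂ / c₁) ^ 2 / (1 - 2 * a) *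
          (T ^ 2 * 2 ^ (2 * a) * (k : ℝ) ^ (2 * a) * (k : ℝ) ^ (1 - 2 * a)) := by
        gcongr
    _ = (c₂ / c₁) ^ 2 * 2 ^ (2 * a) / (1 - 2 * a) * (k * T ^ 2) := by
        rw [mul_assoc _ ((k : ℝ) ^ (2 * a)), ← Real.rpow_add hk0, add_sub_cancel, Real.rpow_one]
        ring

end Decay

section Profile

variable {r : ℕ} {v : Fin r → ℝ} {a c₁ c₂ b T : ℝ}

lemma abs_bounds_of_ratio_bounds (hr : 0 < r) (hc₁ : 0 < c₁)
    (h : ∀ j : Fin r, c₁ * ((j : ℝ) + 1) ^ (-a) ≤ |v j| / |v ⟨0, hr⟩| ∧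
      |v j| / |v ⟨0, hr⟩| ≤ c₂ * ((j : ℝ) + 1) ^ (-a)) :
    0 < |v ⟨0, hr⟩| ∧ ∀ j : Fin r, c₁ * ((j : ℝ) + 1) ^ (-a) * |v ⟨0, hr⟩| ≤ |v j| ∧
      |v j| ≤ c₂ * ((j : ℝ) + 1) ^ (-a) * |v ⟨0, hr⟩| := by
  -- if `v ⟨0, hr⟩ = 0`, the ratio at `j = 0` is `0 / 0 = 0 < c₁`
  have hb : 0 < |v ⟨0, hr⟩| := by
    refine (abs_nonneg _).lt_of_ne' fun h0 => ?_
    have := (h ⟨0, hr⟩).1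
    rw [h0, div_zero] at this
    exact (by positivity : (0 : ℝ) < c₁ * (((0 : ℕ) : ℝ) + 1) ^ (-a)).not_ge this
  exact ⟨hb, fun j => ⟨(le_div_iff₀ hb).1 (h j).1, (div_le_iff₀ hb).1 (h j).2⟩⟩

lemma exists_profile_le {K : ℝ} (hT : 0 < T) (hu : Antitone fun j => |v j|) (hK : 1 ≤ K)
    (hmid : ∀ k : Fin r, 0 < (k : ℕ) → (∀ j, T ≤ |v j| ↔ j < k) →
      ∃ q ∈ Set.Icc (0 : ℝ) 2, lqq q v * T ^ (2 - q) ≤ K * ∑ j, min T |v j| ^ 2) :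
    ∃ q ∈ Set.Icc (0 : ℝ) 2, lqq q v * T ^ (2 - q) ≤ K * ∑ j, min T |v j| ^ 2 := by
  have hR : ∑ j, min T |v j| ^ 2 ≤ K * ∑ j, min T |v j| ^ 2 :=
    le_mul_of_one_le_left (sum_nonneg fun j _ => sq_nonneg _) hK
  by_cases hlow : ∃ j, |v j| < T
  · obtain ⟨k, hk⟩ := exists_threshold_index hu hlow
    rcases Nat.eq_zero_or_pos k with hk0 | hk0
    · have hsmall : ∀ j, |v j| < T := fun j =>
        lt_of_not_ge fun h => Nat.not_lt_zero _ (hk0 ▸ Fin.lt_def.1 ((hk j).1 h))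
      refine ⟨2, by norm_num, le_trans ?_ hR⟩
      calc lqq 2 v * T ^ ((2 : ℝ) - 2) ≤ ∑ j, |v j| ^ (2 : ℝ) := by
            simpa using lqq_le_sum_abs_rpow 2 v
        _ = ∑ j, min T |v j| ^ 2 :=
            sum_congr rfl fun j _ => by rw [Real.rpow_two, min_eq_right (hsmall j).le]
    · exact hmid k hk0 hk
  · simp only [not_exists, not_lt] at hlow
    refine ⟨0, by norm_num, le_trans ?_ hR⟩
    calc lqq 0 v * T ^ ((2 : ℝ) - 0) ≤ (∑ j, |v j| ^ (0 : ℝ)) * T ^ ((2 : ℝ) - 0) := by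
          gcongr; exact lqq_le_sum_abs_rpow 0 v
      _ = ∑ j, min T |v j| ^ 2 := by
          rw [sum_mul]
          exact sum_congr rfl fun j _ => by
            rw [min_eq_left (hlow j), Real.rpow_zero, one_mul, sub_zero, Real.rpow_two]

lemma exists_profile_le_of_half_le (ha : 1 / 2 ≤ a) (hc₁ : 0 < c₁) (hc₁₂ : c₁ ≤ c₂)
    (hb : 0 < b) (hT : 0 < T) (hu : Antitone fun j => |v j|)
    (hdecay : ∀ j : Fin r, c₁ * ((j : ℝ) + 1) ^ (-a) * b ≤ |v j| ∧
      |v j| ≤ c₂ * ((j : ℝ) + 1) ^ (-a) * b) :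
    ∃ q ∈ Set.Icc (0 : ℝ) 2, lqq q v * T ^ (2 - q) ≤
      2 * (c₂ / c₁) ^ a⁻¹ * (1 + Real.log r) * ∑ j, min T |v j| ^ 2 := by
  have ha₀ : 0 < a := by linarith
  have hK : 1 ≤ 2 * (c₂ / c₁) ^ a⁻¹ * (1 + Real.log r) := by
    have h₁ : 1 ≤ (c₂ / c₁) ^ a⁻¹ := Real.one_le_rpow ((one_le_div hc₁).2 hc₁₂) (by positivity)
    have h₂ : 0 ≤ Real.log r := Real.log_natCast_nonneg r
    nlinarith
  refine exists_profile_le hT hu hK fun k hk₀ hk => ⟨a⁻¹, ⟨by positivity, ?_⟩, ?_⟩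
  · exact inv_le_of_inv_le₀ (by norm_num) (by rwa [one_div] at ha)
  calc lqq a⁻¹ v * T ^ (2 - a⁻¹) ≤ (∑ j, |v j| ^ a⁻¹) * T ^ (2 - a⁻¹) := by
        gcongr; exact lqq_le_sum_abs_rpow _ v
    _ ≤ 2 * (c₂ / c₁) ^ a⁻¹ * (1 + Real.log r) * (k * T ^ 2) :=
        sum_rpow_inv_mul_rpow_le ha₀ hc₁ (hc₁.le.trans hc₁₂) hb.le hT (fun j => abs_nonneg _)
          (fun j => (hdecay j).2) hk₀ (mul_le_mul_rpow_of_threshold (hdecay k).1 hk)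
    _ ≤ _ := by gcongr; exact mul_sq_le_sum_min_sq hk

lemma exists_profile_le_of_lt_half (ha₀ : 0 < a) (ha : a < 1 / 2) (hc₁ : 0 < c₁)
    (hb : 0 < b) (hT : 0 < T) (hu : Antitone fun j => |v j|)
    (hdecay : ∀ j : Fin r, c₁ * ((j : ℝ) + 1) ^ (-a) * b ≤ |v j| ∧
      |v j| ≤ c₂ * ((j : ℝ) + 1) ^ (-a) * b) :
    ∃ q ∈ Set.Icc (0 : ℝ) 2, lqq q v * T ^ (2 - q) ≤
      (1 + (c₂ / c₁) ^ 2 * 2 ^ (2 * a) / (1 - 2 * a)) * ∑ j, min T |v j| ^ 2 := by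
  have hC : 0 ≤ (c₂ / c₁) ^ 2 * 2 ^ (2 * a) / (1 - 2 * a) := by
    have : 0 < 1 - 2 * a := by linarith
    positivity
  refine exists_profile_le hT hu (le_add_of_nonneg_right hC) fun k hk₀ hk =>
    ⟨2, by norm_num, ?_⟩
  have hhead := sum_Iio_sq_le ha₀.le ha hc₁ hb.le (fun j => abs_nonneg (v j))
    (fun j => (hdecay j).2) hk₀ (mul_le_mul_rpow_of_threshold (hdecay k).1 hk)
  have htail : 0 ≤ ∑ j ∈ Ici k, |v j| ^ 2 := sum_nonneg fun j _ => sq_nonneg _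
  have hkT : 0 ≤ (k : ℝ) * T ^ 2 := by positivity
  calc lqq 2 v * T ^ ((2 : ℝ) - 2) ≤ ∑ j, |v j| ^ 2 := by
        simpa [Real.rpow_two] using lqq_le_sum_abs_rpow 2 v
    _ = ∑ j ∈ Iio k, |v j| ^ 2 + ∑ j ∈ Ici k, |v j| ^ 2 := sum_univ_eq_sum_Iio_add_sum_Ici _ k
    _ ≤ (1 + (c₂ / c₁) ^ 2 * 2 ^ (2 * a) / (1 - 2 * a)) * (k * T ^ 2 + ∑ j ∈ Ici k, |v j| ^ 2) := by
        nlinarith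
    _ = _ := by rw [sum_min_sq_eq hk]

end Profile

/-- Proposition 1(iii), tightness under polynomial decay: if the absolute values
of the components of `θ`, arranged in descending order via a permutation `e`, satisfy
`c₁ j^{−a} ≤ |θ_{(j)}|/|θ_{(1)}| ≤ c₂ j^{−a}`, then there is a constant `c > 0` depending only on
`a, c₁, c₂` such that the sum `∑ j min(σρ,|θ_j|)²` dominates
`(c/log(e·r))·inf_{q∈[0,2]} ‖θ‖_q^q (σρ)^{2−q}` when `a ≥ 1/2`, and
`c·inf_{q∈[0,2]} ‖θ‖_q^q (σρ)^{2−q}` when `a < 1/2`. -/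
theorem stmt_5 (a c₁ c₂ : ℝ) (ha : 0 < a) (hc₁ : 0 < c₁) (hc₁₂ : c₁ ≤ c₂) :
    ∃ c : ℝ, 0 < c ∧
      ∀ (r : ℕ) (hr : 0 < r) (θ : Fin r → ℝ) (σ ρ : ℝ), 0 < σ → 0 < ρ → θ ≠ 0 →
        ∀ e : Fin r ≃ Fin r,
          (∀ j k : Fin r, j ≤ k → |θ (e k)| ≤ |θ (e j)|) →
          (∀ j : Fin r,
            c₁ * ((j : ℝ) + 1) ^ (-a) ≤ |θ (e j)| / |θ (e ⟨0, hr⟩)| ∧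
              |θ (e j)| / |θ (e ⟨0, hr⟩)| ≤ c₂ * ((j : ℝ) + 1) ^ (-a)) →
          ((1 / 2 ≤ a →
              c / Real.log (Real.exp 1 * r) *
                  sInf ((fun q => lqq q θ * (σ * ρ) ^ (2 - q)) '' Set.Icc (0:ℝ) 2) ≤
                ∑ j, (min (σ * ρ) |θ j|) ^ 2) ∧
            (a < 1 / 2 →
              c * sInf ((fun q => lqq q θ * (σ * ρ) ^ (2 - q)) '' Set.Icc (0:ℝ) 2) ≤
                ∑ j, (min (σ * ρ) |θ j|) ^ 2)) := by
  rcases lt_or_ge a (1 / 2) with hsmall | hlarge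
  · have hp : 0 < 1 - 2 * a := by linarith
    refine ⟨(1 + (c₂ / c₁) ^ 2 * 2 ^ (2 * a) / (1 - 2 * a))⁻¹, by positivity, ?_⟩
    intro r hr θ σ ρ hσ hρ _ e hmono hdecay
    obtain ⟨hb, hbounds⟩ := abs_bounds_of_ratio_bounds (v := θ ∘ e) hr hc₁ hdecay
    refine ⟨fun h => absurd hsmall h.not_gt, fun _ => ?_⟩
    exact inv_mul_sInf_profile_le e (mul_pos hσ hρ).le (by positivity)
      (exists_profile_le_of_lt_half ha hsmall hc₁ hb (mul_pos hσ hρ) hmono hbounds)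
  · have hc₂ : 0 < c₂ := hc₁.trans_le hc₁₂
    refine ⟨(2 * (c₂ / c₁) ^ a⁻¹)⁻¹, by positivity, ?_⟩
    intro r hr θ σ ρ hσ hρ _ e hmono hdecay
    obtain ⟨hb, hbounds⟩ := abs_bounds_of_ratio_bounds (v := θ ∘ e) hr hc₁ hdecay
    refine ⟨fun _ => ?_, fun h => absurd hlarge h.not_ge⟩
    rw [Real.log_mul (Real.exp_ne_zero 1) (Nat.cast_ne_zero.2 hr.ne'), Real.log_exp,
      div_eq_mul_inv, ← mul_inv]
    exact inv_mul_sInf_profile_le e (mul_pos hσ hρ).le (by positivity)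
      (exists_profile_le_of_half_le hlarge hc₁ hc₁₂ hb (mul_pos hσ hρ) hmono hbounds)
end

section
/- Theorem 4, upper bound (MSE of the GCT estimator, fixed design). Assume the sub-Weibull noise assumption with parameters σ > 0 and α ∈ (0,2]. Let T_τ be a generalized thresholding function with constant c₀, let φ ≥ 0, fix δ ∈ (0,1), set ρ = (2/√n)(log(2r/δ))^{1/α} and take τ = λ̂₁^{φ/2}·σρ. Then there is a constant C depending only on c₀ such that, with probability at least 1 − δ, the GCT estimator β̂ = Û Λ̂^{−1−φ} T_τ(Λ̂^{−1+φ} Û^⊤ X^⊤ Y / n) satisfies MSE(β̂) ≤ C · ∑_{j=1}^r min( (λ̂₁/λ̂_j)^{φ/2}·σρ, |θ_j| )². -/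
open MeasureTheory Matrix Finset

/-!
In the eigenbasis `Û` the problem decouples. With `w_j` the unit vector along the `j`-th column
of `XÛ`, the `j`-th input of the thresholding function is `a_j + λ̂_j^{φ/2} ⟨w_j, ε⟩ / √n`, where
`a_j = λ̂_j^{(φ+1)/2} (Û^⊤β)_j`. By the sub-Weibull tail and a union bound over the `r` coordinates,
with probability `≥ 1 - δ` every `|⟨w_j, ε⟩|` is below `σ (log (2r/δ))^{1/α}`, so every noise
term is at most `τ/2`. On that event the two properties of `T_τ` give
`|T_τ(z_j) - a_j| ≤ max (3/2) (c₀+1) · min(τ, |a_j|)`, and since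
`MSE(Ûg) = ∑_j λ̂_j (g_j - (Û^⊤β)_j)²`, rescaling the `j`-th term by `λ̂_j^{-φ/2}` yields the bound
with `C = max (3/2) (c₀+1)²`.
-/

lemma abs_sub_le_max_mul_min {c₀ τ a t : ℝ} (hτ : 0 ≤ τ) (h₁ : |t| ≤ c₀ * |a|)
    (h₂ : |t - a| ≤ 3 / 2 * τ) : |t - a| ≤ max (3 / 2) (c₀ + 1) * min τ |a| := by
  rcases le_total τ |a| with h | h
  · rw [min_eq_left h]
    exact h₂.trans (mul_le_mul_of_nonneg_right (le_max_left _ _) hτ)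
  · rw [min_eq_right h]
    calc |t - a| ≤ |t| + |a| := abs_sub _ _
      _ ≤ (c₀ + 1) * |a| := by linarith
      _ ≤ max (3 / 2) (c₀ + 1) * |a| :=
        mul_le_mul_of_nonneg_right (le_max_right _ _) (abs_nonneg a)

lemma abs_threshold_sub_le {c₀ τ z a : ℝ} {T : ℝ → ℝ}
    (hT₁ : ∀ z z' : ℝ, |z - z'| ≤ τ / 2 → |T z| ≤ c₀ * |z'|) (hT₂ : ∀ z : ℝ, |T z - z| ≤ τ)
    (hz : |z - a| ≤ τ / 2) : |T z - a| ≤ max (3 / 2) (c₀ + 1) * min τ |a| := by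
  refine abs_sub_le_max_mul_min ((abs_nonneg _).trans (hT₂ z)) (hT₁ z a hz) ?_
  calc |T z - a| ≤ |T z - z| + |z - a| := abs_sub_le _ _ _
    _ ≤ 3 / 2 * τ := by linarith [hT₂ z]

lemma mul_sq_rpow_mul_sub {l φ t u : ℝ} (hl : 0 < l) :
    l * (l ^ ((-1 - φ) / 2) * t - u) ^ 2 = (l ^ (-(φ / 2)) * (t - l ^ ((φ + 1) / 2) * u)) ^ 2 := by
  have hsplit : ∀ x y : ℝ, l ^ ((x + y) / 2) = l ^ (x / 2) * l ^ (y / 2) := fun x y => by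
    rw [← Real.rpow_add hl]; ring_nf
  have hsq : l = (l ^ ((1:ℝ) / 2)) ^ 2 := by
    rw [← Real.rpow_natCast, ← Real.rpow_mul hl.le]; norm_num
  have ha : 0 < l ^ (φ / 2) := Real.rpow_pos_of_pos hl _
  have hs : 0 < l ^ ((1:ℝ) / 2) := Real.rpow_pos_of_pos hl _
  rw [show (-1 - φ) / 2 = (-φ + -1) / 2 by ring, hsplit, hsplit, neg_div, neg_div,
    Real.rpow_neg hl.le, Real.rpow_neg hl.le, ← one_div, ← one_div]
  nth_rewrite 1 [hsq]
  field_simp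

lemma coord_sq_error_le {c₀ φ s τ l l₁ u z : ℝ} {T : ℝ → ℝ} (hl : 0 < l) (hl₁ : l ≤ l₁)
    (hφ : 0 ≤ φ) (hτ : τ = l₁ ^ (φ / 2) * s)
    (hT₁ : ∀ z z' : ℝ, |z - z'| ≤ τ / 2 → |T z| ≤ c₀ * |z'|) (hT₂ : ∀ z : ℝ, |T z - z| ≤ τ)
    (hz : |z - l ^ ((φ + 1) / 2) * u| ≤ l ^ (φ / 2) * s / 2) :
    l * (l ^ ((-1 - φ) / 2) * T z - u) ^ 2
      ≤ max (3 / 2) (c₀ + 1) ^ 2 * min ((l₁ / l) ^ (φ / 2) * s) |√l * u| ^ 2 := by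
  set a := l ^ ((φ + 1) / 2) * u
  have hs : 0 ≤ s := nonneg_of_mul_nonneg_right (hτ ▸ (abs_nonneg _).trans (hT₂ 0))
    (Real.rpow_pos_of_pos (hl.trans_le hl₁) _)
  have hz' : |z - a| ≤ τ / 2 := hz.trans <| by
    rw [hτ]; gcongr
  have herr := abs_threshold_sub_le hT₁ hT₂ hz'
  have hc : 0 < l ^ (-(φ / 2)) := Real.rpow_pos_of_pos hl _
  have hcτ : l ^ (-(φ / 2)) * τ = (l₁ / l) ^ (φ / 2) * s := by
    rw [hτ, Real.div_rpow (hl.le.trans hl₁) hl.le, Real.rpow_neg hl.le]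
    field_simp
  have hca : l ^ (-(φ / 2)) * |a| = |√l * u| := by
    rw [abs_mul, abs_mul, abs_of_pos (Real.rpow_pos_of_pos hl _), abs_of_pos (Real.sqrt_pos.2 hl),
      ← mul_assoc, ← Real.rpow_add hl, Real.sqrt_eq_rpow]
    ring_nf
  calc l * (l ^ ((-1 - φ) / 2) * T z - u) ^ 2 = (l ^ (-(φ / 2)) * |T z - a|) ^ 2 := by
        rw [mul_sq_rpow_mul_sub hl, mul_pow, mul_pow, sq_abs]
    _ ≤ (l ^ (-(φ / 2)) * (max (3 / 2) (c₀ + 1) * min τ |a|)) ^ 2 := by gcongr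
    _ = max (3 / 2) (c₀ + 1) ^ 2 * min ((l₁ / l) ^ (φ / 2) * s) |√l * u| ^ 2 := by
        rw [mul_left_comm, mul_min_of_nonneg _ _ hc.le, hcτ, hca]; ring

section Canonical

variable {ι κ m : Type*} [Fintype ι] [Fintype κ] [Fintype m] [DecidableEq m]
  {X : Matrix ι κ ℝ} {U : Matrix κ m ℝ} {lam : m → ℝ} {c : ℝ}

lemma dotProduct_eigen_mulVec_eq_sum (hU : Uᵀ * U = 1) (g : m → ℝ) (β : κ → ℝ) :
    (U *ᵥ g - β) ⬝ᵥ ((U * diagonal lam * Uᵀ) *ᵥ (U *ᵥ g - β))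
      = ∑ j, lam j * (g j - (Uᵀ *ᵥ β) j) ^ 2 := by
  have hcoord : Uᵀ *ᵥ (U *ᵥ g - β) = g - Uᵀ *ᵥ β := by
    rw [mulVec_sub, mulVec_mulVec, hU, one_mulVec]
  rw [← mulVec_mulVec, ← mulVec_mulVec, dotProduct_mulVec, ← mulVec_transpose, hcoord]
  simp only [dotProduct, mulVec_diagonal, Pi.sub_apply]
  exact Finset.sum_congr rfl fun j _ => by ring

lemma transpose_mul_mul_self_eq (hU : Uᵀ * U = 1) (hX : Xᵀ * X = c • (U * diagonal lam * Uᵀ)) :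
    (X * U)ᵀ * X = c • (diagonal lam * Uᵀ) := by
  rw [transpose_mul, Matrix.mul_assoc, hX, Matrix.mul_smul, ← Matrix.mul_assoc, ← Matrix.mul_assoc,
    hU, Matrix.one_mul]

lemma canonical_score_eq (hU : Uᵀ * U = 1) (hX : Xᵀ * X = c • (U * diagonal lam * Uᵀ))
    (β : κ → ℝ) (e : ι → ℝ) (j : m) :
    (Uᵀ *ᵥ (Xᵀ *ᵥ (X *ᵥ β + e))) j = c * (lam j * (Uᵀ *ᵥ β) j) + ((X * U)ᵀ *ᵥ e) j := by
  rw [mulVec_mulVec, ← transpose_mul, mulVec_add, mulVec_mulVec, transpose_mul_mul_self_eq hU hX,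
    smul_mulVec, ← mulVec_mulVec]
  simp only [Pi.add_apply, Pi.smul_apply, mulVec_diagonal, smul_eq_mul]

lemma sum_sq_mul_apply_eq (hU : Uᵀ * U = 1) (hX : Xᵀ * X = c • (U * diagonal lam * Uᵀ)) (j : m) :
    ∑ i, (X * U) i j ^ 2 = c * lam j := by
  have h : (X * U)ᵀ * (X * U) = c • diagonal lam := by
    rw [← Matrix.mul_assoc, transpose_mul_mul_self_eq hU hX, Matrix.smul_mul, Matrix.mul_assoc, hU,
      Matrix.mul_one]
  have hjj := congrArg (fun A => A j j) h
  rw [Matrix.mul_apply] at hjj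
  simpa only [transpose_apply, sq, Matrix.smul_apply, diagonal_apply_eq, smul_eq_mul] using hjj

lemma sum_sq_mul_apply_div_sqrt_eq_one (hU : Uᵀ * U = 1)
    (hX : Xᵀ * X = c • (U * diagonal lam * Uᵀ)) {j : m} (hj : 0 < c * lam j) :
    ∑ i, ((X * U) i j / √(c * lam j)) ^ 2 = 1 := by
  simp only [div_pow, ← sum_div, sum_sq_mul_apply_eq hU hX, Real.sq_sqrt hj.le, div_self hj.ne']

end Canonical

lemma exp_neg_rpow_log_rpow_inv {q α : ℝ} (hq : 1 ≤ q) (hα : α ≠ 0) :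
    Real.exp (-((Real.log q ^ (1 / α)) ^ α)) = q⁻¹ := by
  rw [← Real.rpow_mul (Real.log_nonneg hq), one_div_mul_cancel hα, Real.rpow_one, Real.exp_neg,
    Real.exp_log (zero_lt_one.trans_le hq)]

lemma ofReal_one_sub_le_measure_forall_abs_lt {Ω ι : Type*} [MeasurableSpace Ω] [Fintype ι]
    {P : Measure Ω} [IsProbabilityMeasure P] {Y : ι → Ω → ℝ} {t δ : ℝ} (hδ : 0 ≤ δ)
    (htail : ∀ j, P {ω | t ≤ |Y j ω|} ≤ ENNReal.ofReal (δ / Fintype.card ι)) :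
    ENNReal.ofReal (1 - δ) ≤ P {ω | ∀ j, |Y j ω| < t} := by
  have hunion : P (⋃ j, {ω | t ≤ |Y j ω|}) ≤ ENNReal.ofReal δ := calc
    _ ≤ ∑ j, P {ω | t ≤ |Y j ω|} := measure_iUnion_fintype_le _ _
    _ ≤ ∑ _j : ι, ENNReal.ofReal (δ / Fintype.card ι) := sum_le_sum fun j _ => htail j
    _ = ENNReal.ofReal (Fintype.card ι * (δ / Fintype.card ι)) := by
      rw [sum_const, card_univ, nsmul_eq_mul, ENNReal.ofReal_mul (Nat.cast_nonneg _),
        ENNReal.ofReal_natCast]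
    _ ≤ ENNReal.ofReal δ := by
      refine ENNReal.ofReal_le_ofReal ?_
      rcases eq_or_ne (Fintype.card ι : ℝ) 0 with h | h
      · rw [h, zero_mul]; exact hδ
      · rw [mul_div_cancel₀ _ h]
  have hcompl : {ω | ∀ j, |Y j ω| < t} = Set.univ \ ⋃ j, {ω | t ≤ |Y j ω|} := by
    ext; simp
  rw [hcompl, ENNReal.ofReal_sub _ hδ, ENNReal.ofReal_one, ← measure_univ (μ := P)]
  exact (tsub_le_tsub_left hunion _).trans le_measure_sdiff

lemma ofReal_one_sub_le_measure_subWeibull {Ω : Type*} [MeasurableSpace Ω] {P : Measure Ω}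
    [IsProbabilityMeasure P] {n r : ℕ} {ε : Ω → Fin n → ℝ} {σ α δ : ℝ} (hσ : 0 < σ)
    (hα : 0 < α) (hδ₀ : 0 < δ) (hδ₁ : δ < 2 * r)
    (hsubw : ∀ w : Fin n → ℝ, ∑ i, (w i) ^ 2 = 1 → ∀ t : ℝ, 0 < t →
      P {ω | t ≤ |∑ i, w i * ε ω i|} ≤ ENNReal.ofReal (2 * Real.exp (-((t / σ) ^ α))))
    (w : Fin r → Fin n → ℝ) (hw : ∀ j, ∑ i, w j i ^ 2 = 1) :
    ENNReal.ofReal (1 - δ) ≤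
      P {ω | ∀ j, |∑ i, w j i * ε ω i| < σ * Real.log (2 * r / δ) ^ (1 / α)} := by
  have hq : 1 < 2 * r / δ := by rwa [one_lt_div hδ₀]
  have hL : 0 < Real.log (2 * r / δ) ^ (1 / α) := Real.rpow_pos_of_pos (Real.log_pos hq) _
  refine ofReal_one_sub_le_measure_forall_abs_lt hδ₀.le fun j => ?_
  refine (hsubw (w j) (hw j) _ (mul_pos hσ hL)).trans_eq ?_
  rw [mul_div_cancel_left₀ _ hσ.ne', exp_neg_rpow_log_rpow_inv hq.le hα.ne', Fintype.card_fin,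
    inv_div]
  congr 1
  field_simp

/-- `lam` holds the eigenvalues `λ̂_j = Λ̂²_jj`, so `Λ̂^s` acts as `lam j ^ (s / 2)`. -/
noncomputable def gctEstimator {κ m : Type*} [Fintype κ] [Fintype m] {n : ℕ}
    (X : Matrix (Fin n) κ ℝ) (U : Matrix κ m ℝ) (lam : m → ℝ) (φ : ℝ) (T : ℝ → ℝ)
    (Y : Fin n → ℝ) : κ → ℝ :=
  U *ᵥ fun j => lam j ^ ((-1 - φ) / 2) * T (lam j ^ ((φ - 1) / 2) * (Uᵀ *ᵥ (Xᵀ *ᵥ Y)) j / n)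

theorem gctEstimator_mse_le {κ m : Type*} [Fintype κ] [Fintype m] [DecidableEq m] {n : ℕ}
    {X : Matrix (Fin n) κ ℝ} {U : Matrix κ m ℝ} {lam : m → ℝ} {c₀ φ s τ l₁ : ℝ} {T : ℝ → ℝ}
    (hn : 0 < n) (hU : Uᵀ * U = 1) (hlam : ∀ j, 0 < lam j) (hl₁ : ∀ j, lam j ≤ l₁)
    (hSig : (n : ℝ)⁻¹ • (Xᵀ * X) = U * diagonal lam * Uᵀ) (hφ : 0 ≤ φ)
    (hτ : τ = l₁ ^ (φ / 2) * s) (hT₁ : ∀ z z' : ℝ, |z - z'| ≤ τ / 2 → |T z| ≤ c₀ * |z'|)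
    (hT₂ : ∀ z : ℝ, |T z - z| ≤ τ) (β : κ → ℝ) (e : Fin n → ℝ)
    (he : ∀ j, |∑ i, (X * U) i j / √(n * lam j) * e i| ≤ √n * s / 2) :
    (gctEstimator X U lam φ T (X *ᵥ β + e) - β) ⬝ᵥ
        (((n : ℝ)⁻¹ • (Xᵀ * X)) *ᵥ (gctEstimator X U lam φ T (X *ᵥ β + e) - β))
      ≤ max (3 / 2) (c₀ + 1) ^ 2 *
          ∑ j, min ((l₁ / lam j) ^ (φ / 2) * s) |√(lam j) * (Uᵀ *ᵥ β) j| ^ 2 := by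
  have hn' : (0 : ℝ) < n := Nat.cast_pos.2 hn
  have hX : Xᵀ * X = (n : ℝ) • (U * diagonal lam * Uᵀ) := by rw [← hSig, smul_inv_smul₀ hn'.ne']
  rw [hSig, gctEstimator, dotProduct_eigen_mulVec_eq_sum hU, mul_sum]
  refine sum_le_sum fun j _ => coord_sq_error_le (hlam j) (hl₁ j) hφ hτ hT₁ hT₂ ?_
  have hl := hlam j
  have hcol : |((X * U)ᵀ *ᵥ e) j| ≤ n * √(lam j) * s / 2 := by
    have hnl : 0 < √(n * lam j) := Real.sqrt_pos.2 (mul_pos hn' hl)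
    have hsum :
        ((X * U)ᵀ *ᵥ e) j = √(n * lam j) * ∑ i, (X * U) i j / √(n * lam j) * e i := by
      simp only [mulVec, dotProduct, transpose_apply, mul_sum]
      exact sum_congr rfl fun i _ => by field_simp
    calc |((X * U)ᵀ *ᵥ e) j| ≤ √(n * lam j) * (√n * s / 2) := by
          rw [hsum, abs_mul, abs_of_pos hnl]; gcongr; exact he j
      _ = n * √(lam j) * s / 2 := by
          rw [Real.sqrt_mul hn'.le]
          linear_combination √(lam j) * s / 2 * Real.mul_self_sqrt hn'.le
  have hsplit : lam j ^ ((φ + 1) / 2) = lam j ^ ((φ - 1) / 2) * lam j := by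
    rw [← Real.rpow_add_one hl.ne']; ring_nf
  have hhalf : lam j ^ ((φ - 1) / 2) * √(lam j) = lam j ^ (φ / 2) := by
    rw [Real.sqrt_eq_rpow, ← Real.rpow_add hl]; ring_nf
  have hnoise : lam j ^ ((φ - 1) / 2) * (n * (lam j * (Uᵀ *ᵥ β) j) + ((X * U)ᵀ *ᵥ e) j) / n
      - lam j ^ ((φ + 1) / 2) * (Uᵀ *ᵥ β) j = lam j ^ ((φ - 1) / 2) * ((X * U)ᵀ *ᵥ e) j / n := by
    rw [hsplit]; field_simp; ring
  rw [canonical_score_eq hU hX, hnoise, abs_div, abs_mul,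
    abs_of_pos (Real.rpow_pos_of_pos hl _), abs_of_pos hn', div_le_iff₀ hn']
  calc lam j ^ ((φ - 1) / 2) * |((X * U)ᵀ *ᵥ e) j|
      ≤ lam j ^ ((φ - 1) / 2) * (n * √(lam j) * s / 2) := by gcongr
    _ = lam j ^ (φ / 2) * s / 2 * n := by rw [← hhalf]; ring

theorem stmt_11_general (c₀ : ℝ) :
    ∃ C : ℝ, 0 < C ∧
      ∀ (Ω : Type) (_ : MeasurableSpace Ω) (P : Measure Ω) (_ : IsProbabilityMeasure P)
        (n d r : ℕ) (_hn : 0 < n) (hr : 0 < r)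
        (X : Matrix (Fin n) (Fin d) ℝ) (β : Fin d → ℝ)
        (U : Matrix (Fin d) (Fin r) ℝ) (lam : Fin r → ℝ),
        Uᵀ * U = 1 →
        (∀ j, 0 < lam j) →
        (∀ j k : Fin r, j ≤ k → lam k ≤ lam j) →
        (n : ℝ)⁻¹ • (Xᵀ * X) = U * Matrix.diagonal lam * Uᵀ →
        ∀ (ε : Ω → Fin n → ℝ), Measurable ε →
        ∀ (σ α : ℝ), 0 < σ → α ∈ Set.Ioc (0:ℝ) 2 →
        (∀ w : Fin n → ℝ, ∑ i, (w i) ^ 2 = 1 → ∀ t : ℝ, 0 < t →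
          P {ω | t ≤ |∑ i, w i * ε ω i|} ≤ ENNReal.ofReal (2 * Real.exp (-((t / σ) ^ α)))) →
        ∀ (φ : ℝ), 0 ≤ φ →
        ∀ δ : ℝ, δ ∈ Set.Ioo (0:ℝ) 1 →
        ∀ ρ τ : ℝ,
          ρ = 2 / Real.sqrt n * Real.log (2 * r / δ) ^ (1 / α) →
          τ = lam ⟨0, hr⟩ ^ (φ / 2) * (σ * ρ) →
        ∀ T : ℝ → ℝ,
          (∀ z z' : ℝ, |z - z'| ≤ τ / 2 → |T z| ≤ c₀ * |z'|) →
          (∀ z : ℝ, |T z - z| ≤ τ) →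
        (let θ : Fin r → ℝ := fun j => Real.sqrt (lam j) * (Uᵀ.mulVec β) j
         let bhat : Ω → Fin d → ℝ := fun ω => U.mulVec fun j =>
           lam j ^ ((-(1:ℝ) - φ) / 2) *
             T (lam j ^ ((φ - 1) / 2) * (Uᵀ.mulVec (Xᵀ.mulVec (X.mulVec β + ε ω))) j / n)
         let MSE : (Fin d → ℝ) → ℝ := fun b =>
           (b - β) ⬝ᵥ (((n : ℝ)⁻¹ • (Xᵀ * X)).mulVec (b - β))
         ENNReal.ofReal (1 - δ) ≤
           P {ω | MSE (bhat ω) ≤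
             C * ∑ j, (min ((lam ⟨0, hr⟩ / lam j) ^ (φ / 2) * (σ * ρ)) |θ j|) ^ 2}) := by
  refine ⟨max (3 / 2) (c₀ + 1) ^ 2, pow_pos (lt_max_of_lt_left (by norm_num)) 2, ?_⟩
  intro Ω _ P _ n d r hn hr X β U lam hU hlam hmono hSig ε _ σ α hσ hα hsubw φ hφ δ hδ ρ τ hρ hτ T
    hT₁ hT₂
  have hn' : (0 : ℝ) < n := Nat.cast_pos.2 hn
  set w : Fin r → Fin n → ℝ := fun j i => (X * U) i j / √(n * lam j)
  have hX : Xᵀ * X = (n : ℝ) • (U * diagonal lam * Uᵀ) := by rw [← hSig, smul_inv_smul₀ hn'.ne']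
  have hw : ∀ j, ∑ i, w j i ^ 2 = 1 := fun j =>
    sum_sq_mul_apply_div_sqrt_eq_one hU hX (mul_pos hn' (hlam j))
  have hδr : δ < 2 * r := hδ.2.trans (by norm_cast; omega)
  refine (ofReal_one_sub_le_measure_subWeibull hσ hα.1 hδ.1 hδr hsubw w hw).trans
    (measure_mono fun ω hω => ?_)
  have hlam₀ : ∀ j, lam j ≤ lam ⟨0, hr⟩ := fun j => hmono _ j (Fin.mk_le_mk.2 (Nat.zero_le _))
  refine gctEstimator_mse_le hn hU hlam hlam₀ hSig hφ hτ hT₁ hT₂ β (ε ω) fun j => ?_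
  calc |∑ i, w j i * ε ω i| ≤ σ * Real.log (2 * r / δ) ^ (1 / α) := (hω j).le
    _ = √n * (σ * ρ) / 2 := by rw [hρ]; field_simp

/-- Theorem 4, upper bound: MSE of the GCT estimator, fixed design.
For every constant `c₀` of a generalized thresholding function there is a constant `C`
(depending only on `c₀`) such that: for any fixed design model with sub-Weibull noise
(parameters `σ, α`), `φ ≥ 0`, `δ ∈ (0,1)`, `ρ = (2/√n)(log(2r/δ))^{1/α}` and threshold
`τ = λ̂₁^{φ/2} σρ`, the GCT estimator `β̂ = Û Λ̂^{−1−φ} T_τ(Λ̂^{−1+φ} Û^⊤ X^⊤Y/n)` satisfies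
with probability `≥ 1 − δ`:
`MSE(β̂) ≤ C ∑_j min((λ̂₁/λ̂_j)^{φ/2} σρ, |θ_j|)²`. -/
theorem stmt_11 (c₀ : ℝ) (hc₀ : 0 < c₀) :
    ∃ C : ℝ, 0 < C ∧
      ∀ (Ω : Type) (_ : MeasurableSpace Ω) (P : Measure Ω) (_ : IsProbabilityMeasure P)
        (n d r : ℕ) (_hn : 0 < n) (hr : 0 < r)
        (X : Matrix (Fin n) (Fin d) ℝ) (β : Fin d → ℝ)
        (U : Matrix (Fin d) (Fin r) ℝ) (lam : Fin r → ℝ),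
        Uᵀ * U = 1 →
        (∀ j, 0 < lam j) →
        (∀ j k : Fin r, j ≤ k → lam k ≤ lam j) →
        (n : ℝ)⁻¹ • (Xᵀ * X) = U * Matrix.diagonal lam * Uᵀ →
        ∀ (ε : Ω → Fin n → ℝ), Measurable ε →
        ∀ (σ α : ℝ), 0 < σ → α ∈ Set.Ioc (0:ℝ) 2 →
        (∀ w : Fin n → ℝ, ∑ i, (w i) ^ 2 = 1 → ∀ t : ℝ, 0 < t →
          P {ω | t ≤ |∑ i, w i * ε ω i|} ≤ ENNReal.ofReal (2 * Real.exp (-((t / σ) ^ α)))) →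
        ∀ (φ : ℝ), 0 ≤ φ →
        ∀ δ : ℝ, δ ∈ Set.Ioo (0:ℝ) 1 →
        ∀ ρ τ : ℝ,
          ρ = 2 / Real.sqrt n * Real.log (2 * r / δ) ^ (1 / α) →
          τ = lam ⟨0, hr⟩ ^ (φ / 2) * (σ * ρ) →
        ∀ T : ℝ → ℝ,
          (∀ z z' : ℝ, |z - z'| ≤ τ / 2 → |T z| ≤ c₀ * |z'|) →
          (∀ z : ℝ, |T z - z| ≤ τ) →
        (let θ : Fin r → ℝ := fun j => Real.sqrt (lam j) * (Uᵀ.mulVec β) j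
         let bhat : Ω → Fin d → ℝ := fun ω => U.mulVec fun j =>
           lam j ^ ((-(1:ℝ) - φ) / 2) *
             T (lam j ^ ((φ - 1) / 2) * (Uᵀ.mulVec (Xᵀ.mulVec (X.mulVec β + ε ω))) j / n)
         let MSE : (Fin d → ℝ) → ℝ := fun b =>
           (b - β) ⬝ᵥ (((n : ℝ)⁻¹ • (Xᵀ * X)).mulVec (b - β))
         ENNReal.ofReal (1 - δ) ≤
           P {ω | MSE (bhat ω) ≤
             C * ∑ j, (min ((lam ⟨0, hr⟩ / lam j) ^ (φ / 2) * (σ * ρ)) |θ j|) ^ 2}) :=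
  stmt_11_general c₀
end

section
/- Core deterministic inequality in the proof of Corollary 1. Let r ≥ 1, let λ̂₁ ≥ λ̂₂ ≥ … ≥ λ̂_r > 0, let φ ≥ 0, σ ≥ 0, ρ > 0, let v ∈ ℝ^r, and set θ_j = λ̂_j^{1/2}·v_j for j ∈ [r]. Then ∑_{j=1}^r min( (λ̂₁/λ̂_j)^{φ/2}·σρ, |θ_j| )² ≤ λ̂₁·‖v‖₂²·ρ^{2/(2+φ)} + σ·ρ^{2/(2+φ)}·‖θ‖₁, where ‖θ‖₁ = ∑_j |θ_j| and ‖v‖₂² = ∑_j v_j². -/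
/-!
Split the indices by whether `λ̂_j ≥ λ̂₁ c`, where `c = ρ^{2/(2+φ)}`. If so, `λ̂₁/λ̂_j ≤ c⁻¹`, and
since `ρ = c^{(2+φ)/2}` the first argument of the minimum is at most `c^{-φ/2} σ ρ = σ c`; bounding
the square of the minimum by the product of its two arguments gives a term `σ c |θ_j|`. Otherwise
the square of the minimum is at most `θ_j² = λ̂_j v_j² ≤ λ̂₁ c v_j²`. Each summand is thus bounded
by the sum of the two bounds, and summing over `j` gives the claim.
-/

open Finset

lemma sq_min_le_mul {a b : ℝ} (ha : 0 ≤ a) (hb : 0 ≤ b) : min a b ^ 2 ≤ a * b := by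
  rw [sq]
  exact mul_le_mul (min_le_left a b) (min_le_right a b) (le_min ha hb) ha

lemma rpow_half_mul_le_rpow_two_div {t φ ρ : ℝ} (ht : 0 ≤ t) (hφ : 0 ≤ φ) (hρ : 0 < ρ)
    (htc : t * ρ ^ (2 / (2 + φ)) ≤ 1) :
    t ^ (φ / 2) * ρ ≤ ρ ^ (2 / (2 + φ)) := by
  set c := ρ ^ (2 / (2 + φ))
  have hc : 0 < c := Real.rpow_pos_of_pos hρ _
  have hρc : ρ = c ^ ((2 + φ) / 2) := by
    rw [← inv_div, Real.rpow_rpow_inv hρ.le (by positivity)]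
  have ht_le : t ≤ c⁻¹ := by rwa [inv_eq_one_div, le_div_iff₀ hc]
  calc t ^ (φ / 2) * ρ ≤ c⁻¹ ^ (φ / 2) * c ^ ((2 + φ) / 2) := by
        rw [← hρc]; gcongr
    _ = c := by
        rw [Real.inv_rpow hc.le, ← Real.rpow_neg hc.le, ← Real.rpow_add hc]
        norm_num [add_div]

lemma sq_min_le_mul_sq_add_mul_abs {Λ lam φ σ ρ : ℝ} (hΛ : 0 ≤ Λ) (hlam : 0 < lam) (hφ : 0 ≤ φ)
    (hσ : 0 ≤ σ) (hρ : 0 < ρ) (x : ℝ) :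
    min ((Λ / lam) ^ (φ / 2) * (σ * ρ)) |√lam * x| ^ 2 ≤
      Λ * ρ ^ (2 / (2 + φ)) * x ^ 2 + σ * ρ ^ (2 / (2 + φ)) * |√lam * x| := by
  set c := ρ ^ (2 / (2 + φ))
  set a := (Λ / lam) ^ (φ / 2) * (σ * ρ)
  set b := |√lam * x|
  have ha : 0 ≤ a := by positivity
  have hb : 0 ≤ b := abs_nonneg _
  rcases le_or_gt (Λ * c) lam with hbig | hsmall
  · have hac : a ≤ σ * c := by
      have := rpow_half_mul_le_rpow_two_div (div_nonneg hΛ hlam.le) hφ hρ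
        (by rwa [div_mul_eq_mul_div, div_le_one hlam])
      calc a = σ * ((Λ / lam) ^ (φ / 2) * ρ) := by ring
        _ ≤ σ * c := by gcongr
    have : 0 ≤ Λ * c * x ^ 2 := by positivity
    calc min a b ^ 2 ≤ a * b := sq_min_le_mul ha hb
      _ ≤ σ * c * b := mul_le_mul_of_nonneg_right hac hb
      _ ≤ _ := by linarith
  · have : 0 ≤ σ * c * b := by positivity
    calc min a b ^ 2 ≤ b ^ 2 := pow_le_pow_left₀ (le_min ha hb) (min_le_right a b) 2
      _ = lam * x ^ 2 := by rw [sq_abs, mul_pow, Real.sq_sqrt hlam.le]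
      _ ≤ Λ * c * x ^ 2 := by gcongr
      _ ≤ _ := by linarith

theorem stmt_14_general (r : ℕ) (hr : 0 < r) (lam : Fin r → ℝ)
    (hpos : ∀ j, 0 < lam j)
    (φ σ ρ : ℝ) (hφ : 0 ≤ φ) (hσ : 0 ≤ σ) (hρ : 0 < ρ) (v : Fin r → ℝ) :
    ∑ j, (min ((lam ⟨0, hr⟩ / lam j) ^ (φ / 2) * (σ * ρ)) |Real.sqrt (lam j) * v j|) ^ 2 ≤
      lam ⟨0, hr⟩ * (∑ j, (v j) ^ 2) * ρ ^ (2 / (2 + φ)) +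
        σ * ρ ^ (2 / (2 + φ)) * ∑ j, |Real.sqrt (lam j) * v j| := by
  calc _ ≤ ∑ j, (lam ⟨0, hr⟩ * ρ ^ (2 / (2 + φ)) * v j ^ 2 +
          σ * ρ ^ (2 / (2 + φ)) * |√(lam j) * v j|) :=
        sum_le_sum fun j _ =>
          sq_min_le_mul_sq_add_mul_abs (hpos _).le (hpos j) hφ hσ hρ (v j)
    _ = _ := by
        rw [sum_add_distrib, ← mul_sum, ← mul_sum]
        ring

/-- core deterministic inequality in the proof of Corollary 1:
for decreasing positive `λ̂₁ ≥ … ≥ λ̂_r > 0`, `φ ≥ 0`, `σ ≥ 0`, `ρ > 0`, `v ∈ ℝ^r` and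
`θ_j = λ̂_j^{1/2} v_j`, one has
`∑ j min((λ̂₁/λ̂_j)^{φ/2} σρ, |θ_j|)² ≤ λ̂₁ ‖v‖₂² ρ^{2/(2+φ)} + σ ρ^{2/(2+φ)} ‖θ‖₁`. -/
theorem stmt_14 (r : ℕ) (hr : 0 < r) (lam : Fin r → ℝ)
    (hpos : ∀ j, 0 < lam j) (hmono : ∀ j k : Fin r, j ≤ k → lam k ≤ lam j)
    (φ σ ρ : ℝ) (hφ : 0 ≤ φ) (hσ : 0 ≤ σ) (hρ : 0 < ρ) (v : Fin r → ℝ) :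
    ∑ j, (min ((lam ⟨0, hr⟩ / lam j) ^ (φ / 2) * (σ * ρ)) |Real.sqrt (lam j) * v j|) ^ 2 ≤
      lam ⟨0, hr⟩ * (∑ j, (v j) ^ 2) * ρ ^ (2 / (2 + φ)) +
        σ * ρ ^ (2 / (2 + φ)) * ∑ j, |Real.sqrt (lam j) * v j| :=
  stmt_14_general r hr lam hpos φ σ ρ hφ hσ hρ v
end
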